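/- Let f : ℝ → ℂ be a Schwartz function, let ε > 0 be a real number, and let n, k be nonnegative integers. Set g(x) = (log x)^k · f(x) for x > 0, and let D^n g denote the n-fold application of the Euler operator D h (x) = x · h′(x) to g. Then the function x ↦ x^{ε−1} · (D^n g)(x) is integrable on (0,∞) with respect to Lebesgue measure; equivalently, x ↦ x^{ε} (D^n g)(x) lies in L^1((0,∞), dx/x). -/

import Mathlib

open MeasureTheory

/-- The Euler operator `D h (x) = x * h'(x)`. -/
noncomputable def eulerD (h : ℝ → ℂ) : ℝ → ℂ := fun x => (x : ℂ) * deriv h x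

/-!
Finite sums `∑ (log x)^j • F_j x` with Schwartz `F_j` (`logPowSmulSum`, indexed by a list of
pairs `(j, F_j)`) are stable under `D` on `(0, ∞)`, since `D((log x)^j • F) = (log x)^j • x F' +
j (log x)^(j-1) • F` and `x F'` is again Schwartz. Each term `x^(ε-1) (log x)^j F(x)` is
integrable on `(0, ∞)`: powers of `log` are dominated by arbitrarily small powers of `x` both at
`0` and at `∞`, while `F` is bounded at `0` and decays faster than any power at `∞`.
-/

open Set Filter Asymptotics Real Topology
open scoped SchwartzMap

section Asymptotics

variable {E : Type*} [NormedAddCommGroup E] [NormedSpace ℝ E]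

theorem SchwartzMap.isBigO_log_pow_smul_atTop (F : 𝓢(ℝ, E)) (j : ℕ) (a : ℝ) :
    (fun x : ℝ => log x ^ j • F x) =O[atTop] (· ^ (-a)) := by
  induction j generalizing a with
  | zero =>
    have hF : F =O[atTop] fun x : ℝ => ‖x‖ ^ (-a) :=
      (F.isBigO_cocompact_rpow (-a)).mono (by rw [cocompact_eq_atBot_atTop]; exact le_sup_right)
    refine hF.congr' (.of_forall fun x => by simp) ?_
    filter_upwards [eventually_ge_atTop 0] with x hx
    rw [norm_of_nonneg hx]
  | succ j ih =>
    refine (isBigO_rpow_top_log_smul (lt_add_one a) (ih (a + 1))).congr_left fun x => ?_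
    rw [smul_smul, pow_succ']

theorem SchwartzMap.isBigO_log_pow_smul_nhdsGT_zero (F : 𝓢(ℝ, E)) (j : ℕ) {b : ℝ} (hb : 0 < b) :
    (fun x : ℝ => log x ^ j • F x) =O[𝓝[>] 0] (· ^ (-b)) := by
  induction j generalizing b with
  | zero =>
    have hF : F =O[𝓝[>] 0] fun _ => (1 : ℝ) :=
      ((F.continuous.tendsto 0).isBigO_one ℝ).mono nhdsWithin_le_nhds
    have hone : (fun _ => (1 : ℝ)) =O[𝓝[>] 0] fun x : ℝ => x ^ (-b) := by
      refine IsBigO.of_bound 1 ?_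
      filter_upwards [Ioo_mem_nhdsGT zero_lt_one] with x hx
      rw [one_mul, norm_one, norm_of_nonneg (rpow_nonneg hx.1.le _)]
      exact one_le_rpow_of_pos_of_le_one_of_nonpos hx.1 hx.2.le (by linarith)
    simpa using hF.trans hone
  | succ j ih =>
    refine (isBigO_rpow_zero_log_smul (half_lt_self hb) (ih (half_pos hb))).congr_left fun x => ?_
    rw [smul_smul, pow_succ']

theorem SchwartzMap.integrableOn_rpow_smul_log_pow_smul (F : 𝓢(ℝ, E)) (j : ℕ) {s : ℝ}
    (hs : 0 < s) : IntegrableOn (fun x : ℝ => x ^ (s - 1) • (log x ^ j • F x)) (Ioi 0) := by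
  have hcont : ContinuousOn (fun x : ℝ => log x ^ j • F x) (Ioi 0) :=
    ((continuousOn_log.mono fun _ hx => ne_of_gt hx).pow j).smul F.continuous.continuousOn
  have hnorm := mellin_convergent_of_isBigO_scalar
    (hcont.norm.locallyIntegrableOn measurableSet_Ioi)
    (F.isBigO_log_pow_smul_atTop j (s + 1)).norm_left (lt_add_one s)
    (F.isBigO_log_pow_smul_nhdsGT_zero j (half_pos hs)).norm_left (half_lt_self hs)
  refine hnorm.mono' (((continuousOn_id.rpow_const fun _ hx => Or.inl (ne_of_gt hx)).smul hcont)
    |>.aestronglyMeasurable measurableSet_Ioi) ((ae_restrict_iff' measurableSet_Ioi).mpr ?_)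
  filter_upwards with x (hx : 0 < x)
  rw [norm_smul, norm_of_nonneg (rpow_nonneg hx.le _)]

end Asymptotics

namespace SchwartzMap

noncomputable def eulerCLM : 𝓢(ℝ, ℂ) →L[ℂ] 𝓢(ℝ, ℂ) :=
  (smulLeftCLM ℂ fun x : ℝ => (x : ℂ)).comp (derivCLM ℂ ℂ)

theorem eulerCLM_apply (F : 𝓢(ℝ, ℂ)) (x : ℝ) : eulerCLM F x = eulerD F x := by
  have hx : (fun x : ℝ => (x : ℂ)).HasTemperateGrowth := by fun_prop
  simp [eulerCLM, hx, eulerD, derivCLM_apply]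

theorem hasDerivAt_log_pow_smul (F : 𝓢(ℝ, ℂ)) (j : ℕ) {x : ℝ} (hx : x ≠ 0) :
    HasDerivAt (fun y => log y ^ j • F y)
      (x⁻¹ • (log x ^ j • eulerCLM F x + log x ^ (j - 1) • ((j : ℂ) • F) x)) x := by
  refine (((hasDerivAt_log hx).pow j).smul (F.hasDerivAt x)).congr_deriv ?_
  simp only [eulerCLM_apply, eulerD, smul_apply, Pi.pow_apply, Complex.real_smul, smul_eq_mul]
  have hx' : (x : ℂ) ≠ 0 := by exact_mod_cast hx
  push_cast
  field_simp

end SchwartzMap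

noncomputable def logPowSmulSum (l : List (ℕ × 𝓢(ℝ, ℂ))) (x : ℝ) : ℂ :=
  (l.map fun p => log x ^ p.1 • p.2 x).sum

noncomputable def eulerDTerms (l : List (ℕ × 𝓢(ℝ, ℂ))) : List (ℕ × 𝓢(ℝ, ℂ)) :=
  l.flatMap fun p => [(p.1, SchwartzMap.eulerCLM p.2), (p.1 - 1, (p.1 : ℂ) • p.2)]

theorem hasDerivAt_logPowSmulSum (l : List (ℕ × 𝓢(ℝ, ℂ))) {x : ℝ} (hx : x ≠ 0) :
    HasDerivAt (logPowSmulSum l) (x⁻¹ • logPowSmulSum (eulerDTerms l) x) x := by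
  induction l with
  | nil => exact (hasDerivAt_const x (0 : ℂ)).congr_deriv (by simp [eulerDTerms, logPowSmulSum])
  | cons p l ih =>
    refine ((p.2.hasDerivAt_log_pow_smul p.1 hx).add ih).congr_deriv ?_
    simp [logPowSmulSum, eulerDTerms, smul_add, add_assoc]

theorem eulerD_logPowSmulSum (l : List (ℕ × 𝓢(ℝ, ℂ))) {x : ℝ} (hx : x ≠ 0) :
    eulerD (logPowSmulSum l) x = logPowSmulSum (eulerDTerms l) x := by
  rw [eulerD, (hasDerivAt_logPowSmulSum l hx).deriv, Complex.real_smul, ← mul_assoc]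
  push_cast
  rw [mul_inv_cancel₀ (by exact_mod_cast hx), one_mul]

theorem Set.EqOn.eulerD {h₁ h₂ : ℝ → ℂ} {U : Set ℝ} (hU : IsOpen U) (h : EqOn h₁ h₂ U) :
    EqOn (_root_.eulerD h₁) (_root_.eulerD h₂) U := fun x hx => by
  rw [_root_.eulerD, _root_.eulerD, (h.eventuallyEq_of_mem (hU.mem_nhds hx)).deriv_eq]

theorem eqOn_eulerD_iterate_logPowSmulSum (n : ℕ) (l : List (ℕ × 𝓢(ℝ, ℂ))) :
    EqOn (eulerD^[n] (logPowSmulSum l)) (logPowSmulSum (eulerDTerms^[n] l)) (Ioi 0) := by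
  induction n with
  | zero => exact eqOn_refl _ _
  | succ n ih =>
    intro x hx
    rw [Function.iterate_succ_apply', Function.iterate_succ_apply', ih.eulerD isOpen_Ioi hx,
      eulerD_logPowSmulSum _ (ne_of_gt hx)]

theorem integrableOn_rpow_smul_logPowSmulSum (l : List (ℕ × 𝓢(ℝ, ℂ))) {s : ℝ} (hs : 0 < s) :
    IntegrableOn (fun x : ℝ => x ^ (s - 1) • logPowSmulSum l x) (Ioi 0) := by
  induction l with
  | nil => simp [logPowSmulSum]
  | cons p l ih =>
    refine ((p.2.integrableOn_rpow_smul_log_pow_smul p.1 hs).add ih).congr_fun (fun x _ => ?_)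
      measurableSet_Ioi
    simp [logPowSmulSum, smul_add]

/-- For a Schwartz function `f : ℝ → ℂ`, `ε > 0` and naturals `n, k`, setting
`g x = (log x)^k • f x`, the function `x ↦ x^(ε-1) • (Dⁿ g) x` is integrable on `(0, ∞)`, where
`D` is the Euler operator `D h (x) = x * h'(x)` and `Dⁿ` its `n`-fold iterate. -/
theorem integrable_rpow_smul_eulerD_iterate_log_pow_smul_schwartz
    (f : SchwartzMap ℝ ℂ) (ε : ℝ) (hε : 0 < ε) (n k : ℕ) :
    IntegrableOn
      (fun x : ℝ => x ^ (ε - 1) •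
        (eulerD^[n] (fun x : ℝ => (Real.log x) ^ k • f x)) x)
      (Set.Ioi 0) := by
  have hg : (fun x : ℝ => Real.log x ^ k • f x) = logPowSmulSum [(k, f)] := by
    funext x
    simp [logPowSmulSum]
  refine (integrableOn_rpow_smul_logPowSmulSum (eulerDTerms^[n] [(k, f)]) hε).congr_fun
    (fun x hx => ?_) measurableSet_Ioi
  rw [hg, eqOn_eulerD_iterate_logPowSmulSum n _ hx]
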